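/- arXiv:2006.16157 — 4 statements merged into one kernel-verified Lean document; each statement's English description precedes it below -/
import Mathlib

section
/- Let Ω = [[0, -I_n],[I_n, 0]] represent the standard symplectic form ω on ℝ^(2n). Given symmetric real n×n matrices R and I with I positive definite, the matrix J = [[-I⁻¹R, I⁻¹],[-I - R I⁻¹ R, R I⁻¹]] tames ω, i.e., ω(ξ, Jξ) > 0 for all nonzero ξ ∈ ℝ^(2n). -/
open Matrix

/-!
Writing `ξ = (x, y)`, a direct block computation using only the symmetry of `R` gives
`ω(ξ, Jξ) = xᵀ I x + (R x - y)ᵀ I⁻¹ (R x - y)`.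
Both terms are nonnegative since `I` and `I⁻¹` are positive definite, and they cannot both vanish:
the first forces `x = 0`, after which the second forces `y = 0`.
-/

namespace Matrix

variable {m α : Type*} [Fintype m] [CommRing α]

lemma IsSymm.dotProduct_mulVec_comm {M : Matrix m m α} (hM : M.IsSymm) (v w : m → α) :
    v ⬝ᵥ M *ᵥ w = M *ᵥ v ⬝ᵥ w := by
  rw [dotProduct_mulVec, ← mulVec_transpose, hM.eq]

lemma sumElim_dotProduct_J_mulVec_fromBlocks_mulVec [DecidableEq m] {R A B : Matrix m m α}
    (hR : R.IsSymm) (x y : m → α) :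
    Sum.elim x y ⬝ᵥ J m α *ᵥ (fromBlocks (-(B * R)) B (-A - R * B * R) (R * B) *ᵥ Sum.elim x y) =
      x ⬝ᵥ A *ᵥ x + (R *ᵥ x - y) ⬝ᵥ B *ᵥ (R *ᵥ x - y) := by
  simp only [J, fromBlocks_mulVec, sumElim_dotProduct_sumElim, Sum.elim_comp_inl,
    Sum.elim_comp_inr, ← mulVec_mulVec, zero_mulVec, one_mulVec, neg_mulVec, sub_mulVec,
    mulVec_sub, dotProduct_add, dotProduct_sub, dotProduct_neg, sub_dotProduct,
    zero_add, add_zero]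
  rw [hR.dotProduct_mulVec_comm x (B *ᵥ R *ᵥ x), hR.dotProduct_mulVec_comm x (B *ᵥ y),
    dotProduct_comm y (B *ᵥ R *ᵥ x)]
  ring

lemma PosDef.add_dotProduct_mulVec_pos {A B : Matrix m m ℝ}
    (hA : A.PosDef) (hB : B.PosDef) {x z : m → ℝ} (h : x ≠ 0 ∨ z ≠ 0) :
    0 < x ⬝ᵥ A *ᵥ x + z ⬝ᵥ B *ᵥ z := by
  rcases h with hx | hz
  · exact add_pos_of_pos_of_nonneg (hA.dotProduct_mulVec_pos hx)
      (hB.posSemidef.dotProduct_mulVec_nonneg z)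
  · exact add_pos_of_nonneg_of_pos (hA.posSemidef.dotProduct_mulVec_nonneg x)
      (hB.dotProduct_mulVec_pos hz)

end Matrix

theorem stmt_2_general {n : ℕ} (R I : Matrix (Fin n) (Fin n) ℝ)
    (hR : R.IsSymm) (hIpos : I.PosDef) :
    let Ω : Matrix (Fin n ⊕ Fin n) (Fin n ⊕ Fin n) ℝ := Matrix.fromBlocks 0 (-1) 1 0
    let J : Matrix (Fin n ⊕ Fin n) (Fin n ⊕ Fin n) ℝ :=
      Matrix.fromBlocks (-(I⁻¹ * R)) I⁻¹ (-I - R * I⁻¹ * R) (R * I⁻¹)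
    ∀ ξ : Fin n ⊕ Fin n → ℝ, ξ ≠ 0 → 0 < ξ ⬝ᵥ Ω.mulVec (J.mulVec ξ) := by
  intro Ω J ξ hξ
  obtain ⟨x, y, rfl⟩ : ∃ x y, ξ = Sum.elim x y := ⟨_, _, (Sum.elim_comp_inl_inr ξ).symm⟩
  have hform : Sum.elim x y ⬝ᵥ Ω *ᵥ J *ᵥ Sum.elim x y =
      x ⬝ᵥ I *ᵥ x + (R *ᵥ x - y) ⬝ᵥ I⁻¹ *ᵥ (R *ᵥ x - y) :=
    sumElim_dotProduct_J_mulVec_fromBlocks_mulVec hR x y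
  rw [hform]
  refine hIpos.add_dotProduct_mulVec_pos hIpos.inv ?_
  by_contra! h
  obtain ⟨rfl, hy⟩ := h
  obtain rfl : y = 0 := by rwa [mulVec_zero, zero_sub, neg_eq_zero] at hy
  exact hξ Sum.elim_zero_zero

/-- With Ω = [[0,-Iₙ],[Iₙ,0]] the matrix of the standard symplectic form
ω(x,y) = xᵀ Ω y, the matrix J = [[-I⁻¹R, I⁻¹],[-I - R I⁻¹ R, R I⁻¹]] built from symmetric
R, I with I positive definite tames ω: ω(ξ, Jξ) > 0 for all ξ ≠ 0. -/
theorem stmt_2 {n : ℕ} (R I : Matrix (Fin n) (Fin n) ℝ)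
    (hR : R.IsSymm) (hI : I.IsSymm) (hIpos : I.PosDef) :
    let Ω : Matrix (Fin n ⊕ Fin n) (Fin n ⊕ Fin n) ℝ := Matrix.fromBlocks 0 (-1) 1 0
    let J : Matrix (Fin n ⊕ Fin n) (Fin n ⊕ Fin n) ℝ :=
      Matrix.fromBlocks (-(I⁻¹ * R)) I⁻¹ (-I - R * I⁻¹ * R) (R * I⁻¹)
    ∀ ξ : Fin n ⊕ Fin n → ℝ, ξ ≠ 0 → 0 < ξ ⬝ᵥ Ω.mulVec (J.mulVec ξ) :=
  stmt_2_general R I hR hIpos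
end

section
/- Let ω be the standard symplectic form on ℝ^(2n) and let J be a complex structure on ℝ^(2n) (J² = -Id) that is compatible with ω and tames ω. Let (e₁,…,eₙ,f₁,…,fₙ) be the standard symplectic basis. Then there exists a unique complex n×n matrix N such that, viewing ℝ^(2n) as a complex vector space via J, e_a = Σ_b N_{ab} f_b for all a, and moreover N is symmetric and its imaginary part is positive definite. -/
/-!
Write `J = [[A, B], [C, D]]` in blocks for the splitting into `e`- and `f`-coordinates. Since
`Jᵀ Ω J = Ω` and `J² = -1`, the matrix `ΩJ = [[-C, -D], [A, B]]` is symmetric, so `Bᵀ = B` and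
`D = -Aᵀ`; taming restricted to the `f`-plane makes `B` positive definite. Reading off the
`e`- and `f`-coordinates, `e_a = ∑_b N_ab f_b` says `(Im N) B = 1` and `Re N = (Im N) A`, so the
unique solution is `N = B⁻¹A + i B⁻¹`. It is symmetric because the `(1, 2)` block of `J² = -1`
gives `AB = BAᵀ`, and `Im N = B⁻¹` is positive definite.
-/

open Matrix

namespace Matrix

variable {m n R : Type*}

theorem mulVec_dotProduct_mulVec_mulVec [CommSemiring R] [Fintype n] (J Ω : Matrix n n R)
    (x y : n → R) :
    (J *ᵥ x) ⬝ᵥ Ω *ᵥ (J *ᵥ y) = x ⬝ᵥ (Jᵀ * Ω * J) *ᵥ y := by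
  rw [← vecMul_transpose, ← dotProduct_mulVec, mulVec_mulVec, mulVec_mulVec, Matrix.mul_assoc]

theorem transpose_mul_mul_eq_of_forall_dotProduct [CommSemiring R] [Fintype n] [DecidableEq n]
    {J Ω : Matrix n n R} (h : ∀ x y : n → R, (J *ᵥ x) ⬝ᵥ Ω *ᵥ (J *ᵥ y) = x ⬝ᵥ Ω *ᵥ y) :
    Jᵀ * Ω * J = Ω := by
  ext i j
  simpa [mulVec_single_one, single_dotProduct] using
    (mulVec_dotProduct_mulVec_mulVec J Ω _ _).symm.trans (h (Pi.single i 1) (Pi.single j 1))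

theorem isSymm_J_mul_of_mem_symplecticGroup [CommRing R] [Fintype n] [DecidableEq n]
    {M : Matrix (n ⊕ n) (n ⊕ n) R} (hM : M ∈ symplecticGroup n R) (hM2 : M * M = -1) :
    (Matrix.J n R * M).IsSymm := by
  have h : Mᵀ * Matrix.J n R * M * M = Matrix.J n R * M := by rw [SymplecticGroup.mem_iff'.1 hM]
  rw [Matrix.mul_assoc _ M M, hM2, Matrix.mul_neg, Matrix.mul_one] at h
  rw [IsSymm, transpose_mul, J_transpose, Matrix.mul_neg, ← h]

theorem J_mul_eq_fromBlocks [CommRing R] [Fintype n] [DecidableEq n]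
    (M : Matrix (n ⊕ n) (n ⊕ n) R) :
    Matrix.J n R * M = fromBlocks (-M.toBlocks₂₁) (-M.toBlocks₂₂) M.toBlocks₁₁ M.toBlocks₁₂ := by
  conv_lhs => rw [← fromBlocks_toBlocks M, Matrix.J, fromBlocks_multiply]
  simp

theorem isSymm_toBlocks₁₂_and_toBlocks₂₂_eq_of_isSymm_J_mul [CommRing R] [Fintype n] [DecidableEq n]
    {M : Matrix (n ⊕ n) (n ⊕ n) R} (h : (Matrix.J n R * M).IsSymm) :
    M.toBlocks₁₂.IsSymm ∧ M.toBlocks₂₂ = -M.toBlocks₁₁ᵀ := by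
  rw [IsSymm, J_mul_eq_fromBlocks, fromBlocks_transpose, fromBlocks_inj] at h
  exact ⟨h.2.2.2, by rw [h.2.1, neg_neg]⟩

theorem toBlocks₁₁_mul_toBlocks₁₂_add_of_mul_self_eq_neg_one [Ring R] [Fintype m] [Fintype n]
    [DecidableEq m] [DecidableEq n]
    {M : Matrix (m ⊕ n) (m ⊕ n) R} (h : M * M = -1) :
    M.toBlocks₁₁ * M.toBlocks₁₂ + M.toBlocks₁₂ * M.toBlocks₂₂ = 0 := by
  have := congrArg toBlocks₁₂ h
  rwa [← fromBlocks_toBlocks M, fromBlocks_multiply, toBlocks_fromBlocks₁₂, ← fromBlocks_one,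
    fromBlocks_neg, toBlocks_fromBlocks₁₂, neg_zero] at this

theorem posDef_toBlocks₁₂_of_tame [Fintype n] [DecidableEq n] {M : Matrix (n ⊕ n) (n ⊕ n) ℝ}
    (hsymm : M.toBlocks₁₂.IsSymm)
    (htame : ∀ x : n ⊕ n → ℝ, x ≠ 0 → 0 < x ⬝ᵥ Matrix.J n ℝ *ᵥ (M *ᵥ x)) :
    M.toBlocks₁₂.PosDef := by
  refine PosDef.of_dotProduct_mulVec_pos (isHermitian_iff_isSymm.2 hsymm) fun v hv => ?_
  have hx : (Sum.elim 0 v : n ⊕ n → ℝ) ≠ 0 := fun h => hv (funext fun i => congrFun h (Sum.inr i))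
  simpa [mulVec_mulVec, J_mul_eq_fromBlocks, fromBlocks_mulVec, sumElim_dotProduct_sumElim]
    using htame _ hx

theorem forall_single_inl_eq_sum_iff [CommRing R] [Fintype m] [Fintype n] [DecidableEq m]
    [DecidableEq n] (M : Matrix (m ⊕ n) (m ⊕ n) R) (X Y : Matrix m n R) :
    (∀ a, (Pi.single (Sum.inl a) 1 : m ⊕ n → R) =
      ∑ b, (X a b • Pi.single (Sum.inr b) 1 + Y a b • M *ᵥ Pi.single (Sum.inr b) 1)) ↔
    Y * M.toBlocks₁₂ᵀ = 1 ∧ X + Y * M.toBlocks₂₂ᵀ = 0 := by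
  simp only [funext_iff, ← Matrix.ext_iff, Sum.forall, Finset.sum_apply, Pi.add_apply,
    Pi.smul_apply, mulVec_single_one, Matrix.mul_apply, transpose_apply, one_apply,
    Pi.single_apply, smul_eq_mul, Finset.sum_add_distrib, col_apply, toBlocks₁₂, toBlocks₂₂,
    of_apply, Matrix.add_apply, Matrix.zero_apply, forall_and, Sum.inl.injEq, Sum.inr.injEq,
    reduceCtorEq, if_false, mul_zero, Finset.sum_const_zero, zero_add, mul_ite, mul_one,
    Finset.sum_ite_eq, Finset.mem_univ, if_true]
  exact and_congr (forall₂_congr fun i j => by rw [eq_comm]; simp only [@eq_comm _ j i])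
    (forall₂_congr fun _ _ => eq_comm)

theorem IsSymm.inv_mul_of_mul_eq_mul_transpose [CommRing R] [Fintype n] [DecidableEq n]
    {A B : Matrix n n R} (hB : B.IsSymm) (hAB : A * B = B * Aᵀ) : (B⁻¹ * A).IsSymm := by
  by_cases hdet : IsUnit B.det
  · calc (B⁻¹ * A)ᵀ = Aᵀ * B⁻¹ := by rw [transpose_mul, transpose_nonsing_inv, hB.eq]
      _ = B⁻¹ * (B * Aᵀ) * B⁻¹ := by rw [← Matrix.mul_assoc, nonsing_inv_mul B hdet, Matrix.one_mul]
      _ = B⁻¹ * A := by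
        rw [← hAB, Matrix.mul_assoc, Matrix.mul_assoc, mul_nonsing_inv B hdet, Matrix.mul_one]
  · rw [nonsing_inv_apply_not_isUnit B hdet, Matrix.zero_mul]
    exact isSymm_zero

theorem isSymm_iff_isSymm_map_re_and_isSymm_map_im [Fintype n] {N : Matrix n n ℂ} :
    N.IsSymm ↔ (N.map Complex.re).IsSymm ∧ (N.map Complex.im).IsSymm := by
  simp only [IsSymm.ext_iff, map_apply, Complex.ext_iff, forall_and]

theorem forall_single_inl_eq_sum_iff_eq_of_isSymm [Fintype n] [DecidableEq n]
    {J : Matrix (n ⊕ n) (n ⊕ n) ℝ} (hB : J.toBlocks₁₂.IsSymm)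
    (hD : J.toBlocks₂₂ = -J.toBlocks₁₁ᵀ) (hdet : IsUnit J.toBlocks₁₂.det) (N : Matrix n n ℂ) :
    (∀ a, (Pi.single (Sum.inl a) 1 : n ⊕ n → ℝ) =
      ∑ b, ((N a b).re • Pi.single (Sum.inr b) 1 + (N a b).im • J *ᵥ Pi.single (Sum.inr b) 1)) ↔
    N = of fun a b => ⟨(J.toBlocks₁₂⁻¹ * J.toBlocks₁₁) a b, J.toBlocks₁₂⁻¹ a b⟩ := by
  set A := J.toBlocks₁₁
  set B := J.toBlocks₁₂
  have hN : N = (of fun a b => ⟨(B⁻¹ * A) a b, B⁻¹ a b⟩ : Matrix n n ℂ) ↔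
      N.map Complex.re = B⁻¹ * A ∧ N.map Complex.im = B⁻¹ := by
    simp only [← Matrix.ext_iff, of_apply, map_apply, Complex.ext_iff, forall_and]
  have him : N.map Complex.im * B = 1 ↔ N.map Complex.im = B⁻¹ :=
    ⟨fun h => (inv_eq_left_inv h).symm, fun h => h ▸ nonsing_inv_mul B hdet⟩
  refine (forall_single_inl_eq_sum_iff J (N.map Complex.re) (N.map Complex.im)).trans ?_
  rw [hB.eq, hD, transpose_neg, transpose_transpose, Matrix.mul_neg, ← sub_eq_add_neg,
    sub_eq_zero, him, hN, and_comm]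
  exact and_congr_left fun h => by rw [h]

end Matrix

/-- Let ω be the standard symplectic form on ℝ^(2n) (matrix
Ω = [[0,-Iₙ],[Iₙ,0]]) and J a complex structure compatible with ω and taming ω.
With (e₁,…,eₙ,f₁,…,fₙ) the standard symplectic basis, there is a unique complex
n×n matrix N such that e_a = Σ_b N_{ab}·f_b in the complex vector space (ℝ^(2n), J)
(where (α+iβ)·v = αv + βJv); moreover N is symmetric and Im N is positive definite. -/
theorem stmt_3 {n : ℕ} (J : Matrix (Fin n ⊕ Fin n) (Fin n ⊕ Fin n) ℝ)
    (Ω : Matrix (Fin n ⊕ Fin n) (Fin n ⊕ Fin n) ℝ)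
    (hΩ : Ω = Matrix.fromBlocks 0 (-1) 1 0)
    (hJ2 : J * J = -1)
    (hcompat : ∀ x y : Fin n ⊕ Fin n → ℝ,
      (J.mulVec x) ⬝ᵥ Ω.mulVec (J.mulVec y) = x ⬝ᵥ Ω.mulVec y)
    (htame : ∀ x : Fin n ⊕ Fin n → ℝ, x ≠ 0 → 0 < x ⬝ᵥ Ω.mulVec (J.mulVec x)) :
    (∃! N : Matrix (Fin n) (Fin n) ℂ, ∀ a : Fin n,
      (Pi.single (Sum.inl a) 1 : Fin n ⊕ Fin n → ℝ) =
        ∑ b : Fin n, ((N a b).re • (Pi.single (Sum.inr b) 1 : Fin n ⊕ Fin n → ℝ)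
          + (N a b).im • J.mulVec (Pi.single (Sum.inr b) 1))) ∧
    (∀ N : Matrix (Fin n) (Fin n) ℂ,
      (∀ a : Fin n,
        (Pi.single (Sum.inl a) 1 : Fin n ⊕ Fin n → ℝ) =
          ∑ b : Fin n, ((N a b).re • (Pi.single (Sum.inr b) 1 : Fin n ⊕ Fin n → ℝ)
            + (N a b).im • J.mulVec (Pi.single (Sum.inr b) 1))) →
      N.IsSymm ∧ (Matrix.of fun a b => (N a b).im).PosDef) := by
  change Ω = Matrix.J (Fin n) ℝ at hΩ
  subst hΩ
  have hsympl : J ∈ symplecticGroup (Fin n) ℝ :=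
    SymplecticGroup.mem_iff'.2 (transpose_mul_mul_eq_of_forall_dotProduct hcompat)
  obtain ⟨hB, hD⟩ := isSymm_toBlocks₁₂_and_toBlocks₂₂_eq_of_isSymm_J_mul
    (isSymm_J_mul_of_mem_symplecticGroup hsympl hJ2)
  have hBpos : J.toBlocks₁₂.PosDef := posDef_toBlocks₁₂_of_tame hB htame
  have hAB : J.toBlocks₁₁ * J.toBlocks₁₂ = J.toBlocks₁₂ * J.toBlocks₁₁ᵀ := by
    have := toBlocks₁₁_mul_toBlocks₁₂_add_of_mul_self_eq_neg_one hJ2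
    rwa [hD, Matrix.mul_neg, ← sub_eq_add_neg, sub_eq_zero] at this
  simp only [forall_single_inl_eq_sum_iff_eq_of_isSymm hB hD
    ((isUnit_iff_isUnit_det _).1 hBpos.isUnit), existsUnique_eq, forall_eq, true_and]
  exact ⟨isSymm_iff_isSymm_map_re_and_isSymm_map_im.2
    ⟨hB.inv_mul_of_mul_eq_mul_transpose hAB, hB.inv⟩, hBpos.inv⟩
end

section
/- There is a bijection between the set of pairs (R, I) of real symmetric n×n matrices with I positive definite, and the set of complex structures J on ℝ^(2n) that compatibly tame the standard symplectic form ω, given by (R,I) ↦ J = [[-I⁻¹R, I⁻¹],[-I - R I⁻¹ R, R I⁻¹]]. -/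
/-!
A complex structure `K` (`K * K = -1`) is compatible with `ω` iff `K` is symplectic, i.e. iff
`Ω * K` is symmetric, and then it tames `ω` iff `Ω * K` is positive definite. Solving the block
equations of `K * K = -1` shows that a complex structure `[[A, B], [C, D]]` with `B` invertible is
exactly `[[-I⁻¹R, I⁻¹], [-I - RI⁻¹R, RI⁻¹]]` for `I = B⁻¹` and `R = DB⁻¹`. For symmetric `R` this
matrix has `Ω * K = Qᵀ * diag(I, I⁻¹) * Q` with `Q = [[1, 0], [-R, 1]]`, which is positive definite
iff `I` is. Conversely, if `Ω * K` is positive definite then so is its lower right block `B`, hence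
`I`, and the symmetry of `Ω * K` forces `R` to be symmetric.
-/

open Matrix

namespace Matrix

variable {m α : Type*} [Fintype m]

theorem mulVec_dotProduct_mulVec_mulVec_s4 [CommRing α] (A M : Matrix m m α) (x y : m → α) :
    (A *ᵥ x) ⬝ᵥ M *ᵥ (A *ᵥ y) = x ⬝ᵥ (Aᵀ * M * A) *ᵥ y := by
  rw [← mulVec_mulVec, ← mulVec_mulVec, dotProduct_mulVec x Aᵀ, vecMul_transpose]

open scoped ComplexOrder in
theorem PosDef.fromBlocks_zero {𝕜 n : Type*} [RCLike 𝕜] [Fintype n] {A : Matrix m m 𝕜}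
    {D : Matrix n n 𝕜} (hA : A.PosDef) (hD : D.PosDef) : (fromBlocks A 0 0 D).PosDef := by
  refine posDef_iff_dotProduct_mulVec.2
    ⟨hA.isHermitian.fromBlocks (by simp) hD.isHermitian, fun x hx => ?_⟩
  obtain ⟨u, v, rfl⟩ : ∃ u v, x = Sum.elim u v := ⟨_, _, (Sum.elim_comp_inl_inr x).symm⟩
  simp only [fromBlocks_mulVec, Sum.elim_comp_inl, Sum.elim_comp_inr, zero_mulVec, add_zero,
    zero_add, Function.star_sumElim, sumElim_dotProduct_sumElim]
  rcases eq_or_ne u 0 with rfl | hu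
  · have hv : v ≠ 0 := by rintro rfl; simp at hx
    simpa using hD.dotProduct_mulVec_pos hv
  · exact add_pos_of_pos_of_nonneg (hA.dotProduct_mulVec_pos hu)
      (hD.posSemidef.dotProduct_mulVec_nonneg v)

variable [DecidableEq m]

section CommRing

variable [CommRing α]

theorem ext_of_dotProduct_mulVec {M N : Matrix m m α}
    (h : ∀ x y : m → α, x ⬝ᵥ M *ᵥ y = x ⬝ᵥ N *ᵥ y) : M = N := by
  ext i j
  simpa using h (Pi.single i 1) (Pi.single j 1)

theorem mem_symplecticGroup_iff_forall_dotProduct {K : Matrix (m ⊕ m) (m ⊕ m) α} :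
    K ∈ symplecticGroup m α ↔
      ∀ x y, (K *ᵥ x) ⬝ᵥ J m α *ᵥ (K *ᵥ y) = x ⬝ᵥ J m α *ᵥ y := by
  simp_rw [SymplecticGroup.mem_iff', mulVec_dotProduct_mulVec_mulVec_s4]
  exact ⟨fun h x y => by rw [h], ext_of_dotProduct_mulVec⟩

theorem mem_symplecticGroup_iff_isSymm_J_mul {K : Matrix (m ⊕ m) (m ⊕ m) α} (hK : K * K = -1) :
    K ∈ symplecticGroup m α ↔ (J m α * K).IsSymm := by
  rw [SymplecticGroup.mem_iff', IsSymm, transpose_mul, J_transpose, Matrix.mul_neg]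
  constructor
  · intro h
    calc -(Kᵀ * J m α) = Kᵀ * J m α * K * K := by
          rw [Matrix.mul_assoc _ K, hK, Matrix.mul_neg, Matrix.mul_one]
      _ = J m α * K := by rw [h]
  · intro h
    calc Kᵀ * J m α * K = -(J m α * K * K) := by rw [← h, Matrix.neg_mul, neg_neg]
      _ = J m α := by rw [Matrix.mul_assoc, hK, Matrix.mul_neg, Matrix.mul_one, neg_neg]

theorem J_mul_fromBlocks (A B C D : Matrix m m α) :
    J m α * fromBlocks A B C D = fromBlocks (-C) (-D) A B := by
  simp [J, fromBlocks_multiply]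

theorem toBlocks₂₂_J_mul (K : Matrix (m ⊕ m) (m ⊕ m) α) :
    (J m α * K).toBlocks₂₂ = K.toBlocks₁₂ := by
  conv_lhs => rw [← fromBlocks_toBlocks K, J_mul_fromBlocks, toBlocks_fromBlocks₂₂]

-- `R + iI` is the corresponding point of the Siegel upper half space.
noncomputable def siegelComplexStructure (R I : Matrix m m α) : Matrix (m ⊕ m) (m ⊕ m) α :=
  fromBlocks (-(I⁻¹ * R)) I⁻¹ (-I - R * I⁻¹ * R) (R * I⁻¹)

variable {R I : Matrix m m α}

theorem siegelComplexStructure_mul_self (hI : IsUnit I.det) :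
    siegelComplexStructure R I * siegelComplexStructure R I = -1 := by
  rw [siegelComplexStructure, fromBlocks_multiply, ← fromBlocks_one, fromBlocks_neg, neg_zero]
  congr 1 <;> noncomm_ring <;>
    simp [hI, mul_nonsing_inv, nonsing_inv_mul, mul_nonsing_inv_cancel_left]

theorem siegelComplexStructure_eq_of_mul_self {K : Matrix (m ⊕ m) (m ⊕ m) α} (hK : K * K = -1)
    (hB : IsUnit K.toBlocks₁₂.det) :
    siegelComplexStructure (K.toBlocks₂₂ * K.toBlocks₁₂⁻¹) K.toBlocks₁₂⁻¹ = K := by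
  obtain ⟨A, B, C, D, rfl⟩ : ∃ A B C D, K = fromBlocks A B C D :=
    ⟨_, _, _, _, (fromBlocks_toBlocks K).symm⟩
  simp only [toBlocks_fromBlocks₁₂, toBlocks_fromBlocks₂₂] at hB ⊢
  rw [fromBlocks_multiply, ← fromBlocks_one, fromBlocks_neg, neg_zero] at hK
  obtain ⟨-, hAB, -, hCD⟩ := fromBlocks_inj.1 hK
  rw [siegelComplexStructure, nonsing_inv_nonsing_inv B hB, nonsing_inv_mul_cancel_right _ _ hB]
  congr 1
  · calc -(B * (D * B⁻¹)) = -(B * D) * B⁻¹ := by rw [Matrix.neg_mul, Matrix.mul_assoc]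
      _ = A * B * B⁻¹ := by rw [eq_neg_of_add_eq_zero_left hAB]
      _ = A := mul_nonsing_inv_cancel_right _ _ hB
  · calc -B⁻¹ - D * (D * B⁻¹) = (-1 - D * D) * B⁻¹ := by noncomm_ring
      _ = C * B * B⁻¹ := by rw [← hCD, add_sub_cancel_right]
      _ = C := mul_nonsing_inv_cancel_right _ _ hB

theorem siegelComplexStructure_inj {R' I' : Matrix m m α} (hI : IsUnit I.det)
    (hI' : IsUnit I'.det) :
    siegelComplexStructure R I = siegelComplexStructure R' I' ↔ R = R' ∧ I = I' := by
  refine ⟨fun h => ?_, fun ⟨hR, hI⟩ => hR ▸ hI ▸ rfl⟩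
  obtain ⟨-, hinv, -, hRI⟩ := fromBlocks_inj.1 h
  obtain rfl : I = I' := inv_inj hinv hI
  exact ⟨by simpa [nonsing_inv_mul_cancel_right _ _ hI] using congrArg (· * I) hRI, rfl⟩

theorem J_mul_siegelComplexStructure :
    J m α * siegelComplexStructure R I =
      fromBlocks (I + R * I⁻¹ * R) (-(R * I⁻¹)) (-(I⁻¹ * R)) I⁻¹ := by
  rw [siegelComplexStructure, J_mul_fromBlocks, neg_sub, sub_neg_eq_add, add_comm]

theorem J_mul_siegelComplexStructure_eq_transpose_mul_mul (hR : R.IsSymm) :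
    J m α * siegelComplexStructure R I =
      (fromBlocks 1 0 (-R) 1)ᵀ * fromBlocks I 0 0 I⁻¹ * fromBlocks 1 0 (-R) 1 := by
  rw [J_mul_siegelComplexStructure, fromBlocks_transpose, fromBlocks_multiply, fromBlocks_multiply]
  congr 1 <;> simp [hR.eq, Matrix.mul_assoc]

theorem IsSymm.of_isSymm_J_mul_siegelComplexStructure (hI : IsUnit I.det) (hIs : I.IsSymm)
    (h : (J m α * siegelComplexStructure R I).IsSymm) : R.IsSymm := by
  rw [J_mul_siegelComplexStructure, isSymm_fromBlocks_iff] at h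
  have h21 : I⁻¹ * Rᵀ = I⁻¹ * R := by
    simpa [transpose_nonsing_inv, hIs.eq] using h.2.1
  show Rᵀ = R
  simpa [mul_nonsing_inv_cancel_left _ _ hI] using congrArg (I * ·) h21

end CommRing

def IsCompatibleComplexStructure (K : Matrix (m ⊕ m) (m ⊕ m) ℝ) : Prop :=
  K * K = -1 ∧ (∀ x y, (K *ᵥ x) ⬝ᵥ J m ℝ *ᵥ (K *ᵥ y) = x ⬝ᵥ J m ℝ *ᵥ y) ∧
    ∀ x, x ≠ 0 → 0 < x ⬝ᵥ J m ℝ *ᵥ (K *ᵥ x)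

theorem isCompatibleComplexStructure_iff {K : Matrix (m ⊕ m) (m ⊕ m) ℝ} :
    IsCompatibleComplexStructure K ↔ K * K = -1 ∧ (J m ℝ * K).PosDef := by
  refine ⟨fun ⟨hK, hsymp, htame⟩ => ⟨hK, ?_⟩, fun ⟨hK, hpos⟩ => ⟨hK, ?_, fun x hx => ?_⟩⟩
  · refine posDef_iff_dotProduct_mulVec.2 ⟨?_, fun x hx => ?_⟩
    · rw [isHermitian_iff_isSymm, ← mem_symplecticGroup_iff_isSymm_J_mul hK]
      exact mem_symplecticGroup_iff_forall_dotProduct.2 hsymp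
    · simpa [mulVec_mulVec] using htame x hx
  · rw [← mem_symplecticGroup_iff_forall_dotProduct, mem_symplecticGroup_iff_isSymm_J_mul hK,
      ← isHermitian_iff_isSymm]
    exact hpos.isHermitian
  · simpa [mulVec_mulVec] using hpos.dotProduct_mulVec_pos hx

theorem posDef_J_mul_siegelComplexStructure {R I : Matrix m m ℝ} (hR : R.IsSymm)
    (hI : I.PosDef) : (J m ℝ * siegelComplexStructure R I).PosDef := by
  have hU : IsUnit (fromBlocks 1 0 (-R) 1 : Matrix (m ⊕ m) (m ⊕ m) ℝ) :=
    (isUnit_iff_isUnit_det _).2 (by simp)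
  rw [J_mul_siegelComplexStructure_eq_transpose_mul_mul hR,
    ← conjTranspose_eq_transpose_of_trivial, ← star_eq_conjTranspose,
    hU.posDef_star_left_conjugate_iff]
  exact hI.fromBlocks_zero hI.inv

end Matrix

/-- There is a bijection between pairs (R,I) of real symmetric n×n
matrices with I positive definite and complex structures J on ℝ^(2n) that compatibly
tame the standard symplectic form ω (with matrix Ω = [[0,-Iₙ],[Iₙ,0]]), given by
(R,I) ↦ J = [[-I⁻¹R, I⁻¹],[-I - R I⁻¹ R, R I⁻¹]]. -/
theorem stmt_4 {n : ℕ} (Ω : Matrix (Fin n ⊕ Fin n) (Fin n ⊕ Fin n) ℝ)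
    (hΩ : Ω = Matrix.fromBlocks 0 (-1) 1 0) :
    ∃ φ : {p : Matrix (Fin n) (Fin n) ℝ × Matrix (Fin n) (Fin n) ℝ //
            p.1.IsSymm ∧ p.2.IsSymm ∧ p.2.PosDef} →
          {J : Matrix (Fin n ⊕ Fin n) (Fin n ⊕ Fin n) ℝ //
            J * J = -1 ∧
            (∀ x y : Fin n ⊕ Fin n → ℝ,
              (J.mulVec x) ⬝ᵥ Ω.mulVec (J.mulVec y) = x ⬝ᵥ Ω.mulVec y) ∧
            (∀ x : Fin n ⊕ Fin n → ℝ, x ≠ 0 → 0 < x ⬝ᵥ Ω.mulVec (J.mulVec x))},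
      Function.Bijective φ ∧
      ∀ p, (φ p : Matrix (Fin n ⊕ Fin n) (Fin n ⊕ Fin n) ℝ) =
        Matrix.fromBlocks (-(p.1.2⁻¹ * p.1.1)) p.1.2⁻¹
          (-p.1.2 - p.1.1 * p.1.2⁻¹ * p.1.1) (p.1.1 * p.1.2⁻¹) := by
  obtain rfl : Ω = J (Fin n) ℝ := hΩ
  refine ⟨fun p => ⟨siegelComplexStructure p.1.1 p.1.2, isCompatibleComplexStructure_iff.2
      ⟨siegelComplexStructure_mul_self p.2.2.2.det_pos.ne'.isUnit,
        posDef_J_mul_siegelComplexStructure p.2.1 p.2.2.2⟩⟩, ⟨?_, ?_⟩, fun _ => rfl⟩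
  · intro ⟨⟨R, I⟩, _, _, hI⟩ ⟨⟨R', I'⟩, _, _, hI'⟩ h
    obtain ⟨rfl, rfl⟩ := (siegelComplexStructure_inj hI.det_pos.ne'.isUnit
      hI'.det_pos.ne'.isUnit).1 (congrArg Subtype.val h)
    rfl
  · rintro ⟨K, hK⟩
    obtain ⟨hKK, hpos⟩ := isCompatibleComplexStructure_iff.1 hK
    have hB : K.toBlocks₁₂.PosDef := toBlocks₂₂_J_mul K ▸ hpos.submatrix Sum.inr_injective
    have hKeq := siegelComplexStructure_eq_of_mul_self hKK hB.det_pos.ne'.isUnit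
    have hI : K.toBlocks₁₂⁻¹.IsSymm := isHermitian_iff_isSymm.1 hB.inv.isHermitian
    rw [← hKeq] at hpos
    have hR := IsSymm.of_isSymm_J_mul_siegelComplexStructure hB.inv.det_pos.ne'.isUnit hI
      (isHermitian_iff_isSymm.1 hpos.isHermitian)
    exact ⟨⟨(_, _), hR, hI, hB.inv⟩, Subtype.ext hKeq⟩
end

section
/- Let N: ℍ → SH(2) be defined by N(τ)₁₁ = (τ²/2)(τ + 3τ̄), N(τ)₁₂ = N(τ)₂₁ = -(3/2)τ(τ + τ̄), N(τ)₂₂ = 3(τ + τ̄) + (3/2)(τ - τ̄). Then for every τ ∈ ℍ, the matrix N(τ) is symmetric with imaginary part Im N(τ) = [[Im(τ)³ + 3Re(τ)²Im(τ), -3Re(τ)Im(τ)],[-3Re(τ)Im(τ), 3Im(τ)]], which is positive definite; hence N takes values in the Siegel upper half space SH(2). -/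
/-!
Write `τ = x + iy`. Since `τ + τ̄ = 2x` is real and `τ - τ̄ = 2iy`, the imaginary parts of the
entries of `N(τ)` are polynomials in `x, y`, and `Im N(τ)` has `(1,1)`-entry `y (y² + 3x²) > 0`
and determinant `3y (y³ + 3x²y) - 9x²y² = 3y⁴ > 0`; a symmetric `2 × 2` matrix with positive
`(1,1)`-entry and positive determinant is positive definite by completing the square.
-/

open Matrix ComplexConjugate

/-- The (entrywise) imaginary part of a complex matrix. -/
def matIm {n : ℕ} (τ : Matrix (Fin n) (Fin n) ℂ) : Matrix (Fin n) (Fin n) ℝ :=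
  Matrix.of fun i j => (τ i j).im

/-- The period matrix of the t³ model of N=2 supergravity. -/
noncomputable def Nt3 (τ : ℂ) : Matrix (Fin 2) (Fin 2) ℂ :=
  !![(τ^2/2) * (τ + 3 * conj τ), -(3/2) * τ * (τ + conj τ);
     -(3/2) * τ * (τ + conj τ), 3 * (τ + conj τ) + (3/2) * (τ - conj τ)]

theorem Matrix.posDef_fin_two_of_pos_of_det_pos {K : Type*} [Field K] [LinearOrder K]
    [IsStrictOrderedRing K] [StarRing K] [TrivialStar K] {a b d : K}
    (ha : 0 < a) (hdet : 0 < a * d - b ^ 2) : (!![a, b; b, d]).PosDef := by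
  refine posDef_iff_dotProduct_mulVec.2
    ⟨isHermitian_iff_isSymm.2 <| IsSymm.ext fun i j => by fin_cases i <;> fin_cases j <;> rfl,
      fun v hv => ?_⟩
  simp only [star_trivial, dotProduct, mulVec, Fin.sum_univ_two, of_apply, cons_val',
    cons_val_zero, cons_val_one, empty_val', cons_val_fin_one]
  -- `a · vᵀ M v = (a v₀ + b v₁)² + (a d - b²) v₁²`
  have hsq : 0 < (a * v 0 + b * v 1) ^ 2 + (a * d - b ^ 2) * v 1 ^ 2 := by
    rcases eq_or_ne (v 1) 0 with hv₁ | hv₁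
    · have hv₀ : v 0 ≠ 0 := fun hv₀ => hv (by ext i; fin_cases i <;> assumption)
      rw [hv₁]
      simpa using sq_pos_of_ne_zero (mul_ne_zero ha.ne' hv₀)
    · exact add_pos_of_nonneg_of_pos (sq_nonneg _) (mul_pos hdet (by positivity))
  refine pos_of_mul_pos_right (a := a) ?_ ha.le
  linear_combination hsq

theorem Nt3_isSymm (τ : ℂ) : (Nt3 τ).IsSymm :=
  IsSymm.ext fun i j => by fin_cases i <;> fin_cases j <;> rfl

theorem matIm_Nt3 (τ : ℂ) :
    matIm (Nt3 τ) =
      !![τ.im^3 + 3 * τ.re^2 * τ.im, -3 * τ.re * τ.im;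
         -3 * τ.re * τ.im, 3 * τ.im] := by
  ext i j
  fin_cases i <;> fin_cases j <;> simp [matIm, Nt3, Complex.mul_im, pow_two] <;> ring

/-- For every τ in the upper half plane, the t³-model period matrix
N(τ) is symmetric, its imaginary part equals
[[Im(τ)³ + 3Re(τ)²Im(τ), -3Re(τ)Im(τ)],[-3Re(τ)Im(τ), 3Im(τ)]], and this imaginary
part is positive definite; hence N takes values in the Siegel upper half space. -/
theorem stmt_9 (τ : ℂ) (hτ : 0 < τ.im) :
    (Nt3 τ).IsSymm ∧
    matIm (Nt3 τ) =
      !![τ.im^3 + 3 * τ.re^2 * τ.im, -3 * τ.re * τ.im;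
         -3 * τ.re * τ.im, 3 * τ.im] ∧
    (matIm (Nt3 τ)).PosDef := by
  refine ⟨Nt3_isSymm τ, matIm_Nt3 τ, ?_⟩
  rw [matIm_Nt3]
  apply posDef_fin_two_of_pos_of_det_pos
  · positivity
  · have hdet : (τ.im ^ 3 + 3 * τ.re ^ 2 * τ.im) * (3 * τ.im) - (-3 * τ.re * τ.im) ^ 2
        = 3 * τ.im ^ 4 := by ring
    rw [hdet]
    positivity
end
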